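/- arXiv:1505.00776 — 5 statements merged into one kernel-verified Lean document; each statement's English description precedes it below -/
import Mathlib

section
/- Let A be an invertible d×d matrix over the finite field F_q (q = p^n, p prime), let f(t) be the characteristic polynomial of A, and let m be the multiplicative order of A. If f(t) is reducible over F_q, then m < q^d - 1. -/
/-! Let μ be the minimal polynomial of `A`. Sending the root of `μ` to `A` embeds `F[X]/(μ)`, a ring
with `q ^ deg μ` elements, into the matrix ring, so the order of `A` is at most the number of
units of `F[X]/(μ)`, which misses `0`. This settles the case `deg μ < d`. If `deg μ = d`, then
`μ` is the reducible characteristic polynomial, so `F[X]/(μ)` has a zero divisor, a second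
nonzero non-unit, and the order of `A` is at most `q ^ d - 2`. -/

open Polynomial

theorem orderOf_le_natCard_units {M : Type*} [Monoid M] [Finite M] (a : M) :
    orderOf a ≤ Nat.card Mˣ := by
  by_cases ha : IsUnit a
  · rw [← ha.unit_spec, orderOf_units]
    exact orderOf_le_card
  · rw [orderOf_eq_zero_iff'.mpr fun k hk hak ↦ ha (IsUnit.of_pow_eq_one hak hk.ne')]
    exact Nat.zero_le _

theorem natCard_units_add_two_le_of_mul_eq_zero {R : Type*} [Ring R] [Finite R] {a b : R}
    (ha : a ≠ 0) (hb : b ≠ 0) (hab : a * b = 0) : Nat.card Rˣ + 2 ≤ Nat.card R := by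
  have : Nontrivial R := nontrivial_of_ne a 0 ha
  have ha_unit : ¬ IsUnit a := fun h ↦ hb (by simpa using (h.mul_right_eq_zero).mp hab)
  have hsub : Set.range ((↑) : Rˣ → R) ⊆ ({0, a} : Set R)ᶜ := by
    rintro _ ⟨u, rfl⟩ (hu | hu)
    · exact u.ne_zero hu
    · exact ha_unit (hu ▸ u.isUnit)
  calc Nat.card Rˣ + 2 = (Set.range ((↑) : Rˣ → R)).ncard + ({0, a} : Set R).ncard := by
        rw [Set.ncard_range_of_injective Units.val_injective, Set.ncard_pair ha.symm]
    _ ≤ ({0, a} : Set R)ᶜ.ncard + ({0, a} : Set R).ncard :=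
        Nat.add_le_add_right (Set.ncard_le_ncard hsub) _
    _ = Nat.card R := Set.ncard_compl_add_ncard _

theorem natCard_units_add_two_le_of_not_isDomain {R : Type*} [Ring R] [Finite R] [Nontrivial R]
    (h : ¬ IsDomain R) : Nat.card Rˣ + 2 ≤ Nat.card R := by
  obtain ⟨a, b, hab, ha, hb⟩ : ∃ a b : R, a * b = 0 ∧ a ≠ 0 ∧ b ≠ 0 := by
    by_contra! H
    have : NoZeroDivisors R := ⟨fun {a b} hab ↦ or_iff_not_imp_left.mpr (H a b hab)⟩
    exact h (NoZeroDivisors.to_isDomain R)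
  exact natCard_units_add_two_le_of_mul_eq_zero ha hb hab

theorem AdjoinRoot.isDomain_iff_prime {R : Type*} [CommRing R] {f : R[X]} (hf : f ≠ 0) :
    IsDomain (AdjoinRoot f) ↔ Prime f :=
  (Ideal.Quotient.isDomain_iff_prime _).trans (Ideal.span_singleton_prime hf)

theorem AdjoinRoot.natCard_eq_pow_natDegree {R : Type*} [CommRing R] {f : R[X]} (hf : f.Monic) :
    Nat.card (AdjoinRoot f) = Nat.card R ^ f.natDegree := by
  rw [Nat.card_congr (AdjoinRoot.powerBasis' hf).basis.equivFun.toEquiv, Nat.card_fun,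
    Nat.card_fin, AdjoinRoot.powerBasis'_dim]

theorem AdjoinRoot.orderOf_root_minpoly (F : Type*) {S : Type*} [Field F] [Ring S] [Algebra F S]
    (x : S) :
    orderOf (AdjoinRoot.root (minpoly F x)) = orderOf x := by
  let φ : AdjoinRoot (minpoly F x) →+* S :=
    Ideal.Quotient.lift _ (aeval x).toRingHom fun g hg ↦ by
      obtain ⟨c, rfl⟩ := Ideal.mem_span_singleton'.mp hg
      simp
  have hφ : Function.Injective φ := (injective_iff_map_eq_zero φ).mpr fun z hz ↦ by
    obtain ⟨g, rfl⟩ := AdjoinRoot.mk_surjective z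
    exact AdjoinRoot.mk_eq_zero.mpr (minpoly.dvd F x hz)
  have hroot : φ (AdjoinRoot.root _) = x := aeval_X x
  exact (orderOf_injective φ.toMonoidHom hφ _).symm.trans (congrArg orderOf hroot)

theorem Matrix.minpoly_eq_charpoly_of_natDegree_eq {K n : Type*} [Field K] [Fintype n]
    [DecidableEq n] (A : Matrix n n K) (h : (minpoly K A).natDegree = Fintype.card n) :
    minpoly K A = A.charpoly :=
  (eq_of_monic_of_dvd_of_natDegree_le (minpoly.monic (IsIntegral.of_finite K A))
    A.charpoly_monic A.minpoly_dvd_charpoly (by rw [A.charpoly_natDegree_eq_dim, h])).symm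

theorem order_lt_of_charpoly_reducible_general
    (p n d : ℕ) (hd : 0 < d)
    (F : Type) [Field F] [Fintype F] (hF : Fintype.card F = p ^ n)
    (A : Matrix (Fin d) (Fin d) F)
    (hred : ¬ Irreducible (Matrix.charpoly A)) :
    orderOf A < (p ^ n) ^ d - 1 := by
  have : Nonempty (Fin d) := ⟨⟨0, hd⟩⟩
  rw [← AdjoinRoot.orderOf_root_minpoly F A]
  set μ := minpoly F A
  have hint : IsIntegral F A := IsIntegral.of_finite F A
  have hcard : Nat.card (AdjoinRoot μ) = (p ^ n) ^ μ.natDegree := by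
    rw [AdjoinRoot.natCard_eq_pow_natDegree (minpoly.monic hint), Nat.card_eq_fintype_card, hF]
  have : Finite (AdjoinRoot μ) := Nat.finite_of_card_ne_zero (by simp [hcard, ← hF])
  have : Nontrivial (AdjoinRoot μ) :=
    AdjoinRoot.nontrivial μ (natDegree_pos_iff_degree_pos.mp (minpoly.natDegree_pos hint)).ne'
  have hdeg : μ.natDegree ≤ d := by
    simpa using natDegree_le_of_dvd A.minpoly_dvd_charpoly A.charpoly_monic.ne_zero
  rcases hdeg.lt_or_eq with hlt | heq
  · have hq : 1 < p ^ n := hF ▸ Fintype.one_lt_card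
    calc orderOf (AdjoinRoot.root μ) < (p ^ n) ^ μ.natDegree := hcard ▸ orderOf_lt_card _
      _ ≤ (p ^ n) ^ d - 1 := Nat.le_sub_one_of_lt (Nat.pow_lt_pow_right hq hlt)
  · have hμ : μ = A.charpoly := A.minpoly_eq_charpoly_of_natDegree_eq (by simpa using heq)
    have hnot : ¬ IsDomain (AdjoinRoot μ) := fun h ↦
      hred (hμ ▸ ((AdjoinRoot.isDomain_iff_prime (minpoly.ne_zero hint)).mp h).irreducible)
    have hunits := natCard_units_add_two_le_of_not_isDomain hnot
    rw [hcard, heq] at hunits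
    have := orderOf_le_natCard_units (AdjoinRoot.root μ)
    omega

/-- Let A be an invertible d×d matrix over the finite field F_q
(q = p^n, p prime), let f(t) be the characteristic polynomial of A, and let m be
the multiplicative order of A. If f(t) is reducible over F_q, then m < q^d - 1. -/
theorem order_lt_of_charpoly_reducible
    (p n d : ℕ) (hp : p.Prime) (hn : 0 < n) (hd : 0 < d)
    (F : Type) [Field F] [Fintype F] (hF : Fintype.card F = p ^ n)
    (A : Matrix (Fin d) (Fin d) F) (hA : IsUnit A)
    (hred : ¬ Irreducible (Matrix.charpoly A)) :
    orderOf A < (p ^ n) ^ d - 1 :=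
  order_lt_of_charpoly_reducible_general p n d hd F hF A hred
end

section
/- Let A be an invertible d×d matrix over the finite field F_q (q = p^n, p prime) whose characteristic polynomial f(t) is irreducible over F_q, and let m be the multiplicative order of A. Then: (a) p does not divide m; (b) d equals the multiplicative order of q modulo m; and (c) rank(A^l - E) = d (i.e. A^l - E is invertible) for every positive integer l < m dividing m. -/
/-!
Since `f = A.charpoly` is irreducible, `K = F[X]/(f)` is a field with `q ^ d` elements and
`X ↦ A` embeds it into the matrix algebra. Hence `A` has the multiplicative order `m` of the
root `α` of `f` in `K`, and every nonzero polynomial in `A`, such as `A ^ l - 1` for `0 < l < m`,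
is invertible. The Frobenius `x ↦ x ^ q` of `K` over `F` has order `d`, and `K` is generated by
`α`, so `α ^ q ^ e = α` iff `d ∣ e`; that is, `m ∣ q ^ e - 1` iff `d ∣ e`. This gives (b), and
(a) because `m ∣ q ^ d - 1` is prime to `q`.
-/

open Polynomial

theorem pow_eq_self_iff_pow_sub_one_eq_one {M₀ : Type*} [MonoidWithZero M₀]
    [IsRightCancelMulZero M₀] {x : M₀} (hx : x ≠ 0) {N : ℕ} (hN : N ≠ 0) :
    x ^ N = x ↔ x ^ (N - 1) = 1 := by
  rw [← mul_eq_right₀ hx, ← pow_succ, Nat.sub_add_cancel (Nat.one_le_iff_ne_zero.mpr hN)]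

namespace AdjoinRoot

variable {F : Type*} [Field F] {f : F[X]}

theorem finite_of_ne_zero [Finite F] (hf : f ≠ 0) : Finite (AdjoinRoot f) :=
  have := (powerBasis hf).finite
  Module.finite_of_finite F

variable [Fintype F] [Fact (Irreducible f)]

theorem root_pow_card_pow_eq_root_iff (e : ℕ) :
    root f ^ Fintype.card F ^ e = root f ↔ f.natDegree ∣ e := by
  have hf0 := (Fact.out : Irreducible f).ne_zero
  have := finite_of_ne_zero hf0
  rw [← (powerBasis hf0).finrank.trans (powerBasis_dim hf0),
    ← FiniteField.orderOf_frobeniusAlgHom, orderOf_dvd_iff_pow_eq_one]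
  refine ⟨fun h => algHom_ext ?_, fun h => ?_⟩
  · simpa [AlgHom.coe_pow, FiniteField.coe_frobeniusAlgHom, pow_iterate] using h
  · simpa [AlgHom.coe_pow, FiniteField.coe_frobeniusAlgHom, pow_iterate] using
      DFunLike.congr_fun h (root f)

theorem orderOf_root_dvd_card_pow_sub_one_iff (h0 : root f ≠ 0) (e : ℕ) :
    orderOf (root f) ∣ Fintype.card F ^ e - 1 ↔ f.natDegree ∣ e := by
  rw [orderOf_dvd_iff_pow_eq_one, ← pow_eq_self_iff_pow_sub_one_eq_one h0
    (pow_ne_zero e Fintype.card_ne_zero), root_pow_card_pow_eq_root_iff]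

end AdjoinRoot

namespace Matrix

variable {F ι : Type*} [Field F] [Fintype ι] [DecidableEq ι] (A : Matrix ι ι F)

noncomputable def adjoinRootCharpolyHom : AdjoinRoot A.charpoly →ₐ[F] Matrix ι ι F :=
  Ideal.Quotient.liftₐ _ (aeval A) fun g hg => by
    obtain ⟨c, rfl⟩ := Ideal.mem_span_singleton'.mp hg
    rw [map_mul, aeval_self_charpoly, mul_zero]

@[simp]
theorem adjoinRootCharpolyHom_mk (g : F[X]) :
    A.adjoinRootCharpolyHom (AdjoinRoot.mk A.charpoly g) = aeval A g :=
  rfl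

@[simp]
theorem adjoinRootCharpolyHom_root : A.adjoinRootCharpolyHom (AdjoinRoot.root A.charpoly) = A := by
  rw [← AdjoinRoot.mk_X, adjoinRootCharpolyHom_mk, aeval_X]

variable {A}

theorem injective_adjoinRootCharpolyHom (h : Irreducible A.charpoly) :
    Function.Injective A.adjoinRootCharpolyHom := by
  have := Fact.mk h
  have : Nonempty ι := Fintype.card_pos_iff.mp (A.charpoly_natDegree_eq_dim ▸ h.natDegree_pos)
  exact RingHom.injective (A.adjoinRootCharpolyHom : AdjoinRoot A.charpoly →+* Matrix ι ι F)

theorem orderOf_eq_orderOf_root (h : Irreducible A.charpoly) :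
    orderOf A = orderOf (AdjoinRoot.root A.charpoly) := by
  conv_lhs => rw [← A.adjoinRootCharpolyHom_root]
  exact orderOf_injective A.adjoinRootCharpolyHom.toMonoidHom (injective_adjoinRootCharpolyHom h) _

theorem isUnit_aeval_of_irreducible_charpoly (h : Irreducible A.charpoly) {g : F[X]}
    (hg : aeval A g ≠ 0) : IsUnit (aeval A g) := by
  have := Fact.mk h
  rw [← adjoinRootCharpolyHom_mk] at hg ⊢
  exact (isUnit_iff_ne_zero.mpr fun h0 => hg (by rw [h0, map_zero])).map _

end Matrix

/-- If the characteristic polynomial of an invertible d×d matrix A over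
F_q (q = p^n) is irreducible, and m is the multiplicative order of A, then
(a) p ∤ m, (b) d is the multiplicative order of q modulo m, and
(c) rank(A^l - E) = d for every positive l < m dividing m. -/
theorem charpoly_irreducible_necessary_conditions
    (p n d : ℕ) (hp : p.Prime) (hn : 0 < n)
    (F : Type) [Field F] [Fintype F] (hF : Fintype.card F = p ^ n)
    (A : Matrix (Fin d) (Fin d) F) (hA : IsUnit A)
    (m : ℕ) (hm : m = orderOf A)
    (hirr : Irreducible (Matrix.charpoly A)) :
    ¬ p ∣ m ∧
    IsLeast {e : ℕ | 0 < e ∧ m ∣ (p ^ n) ^ e - 1} d ∧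
    ∀ l : ℕ, 0 < l → l < m → l ∣ m → (A ^ l - 1).rank = d := by
  have := Fact.mk hirr
  have hdeg : A.charpoly.natDegree = d := by rw [A.charpoly_natDegree_eq_dim, Fintype.card_fin]
  have hd : 0 < d := hdeg ▸ hirr.natDegree_pos
  have := NeZero.of_pos hd
  have hroot : AdjoinRoot.root A.charpoly ≠ 0 := fun h0 =>
    hA.ne_zero (by rw [← A.adjoinRootCharpolyHom_root, h0, map_zero])
  have hdvd (e : ℕ) : m ∣ (p ^ n) ^ e - 1 ↔ d ∣ e := by
    have := AdjoinRoot.orderOf_root_dvd_card_pow_sub_one_iff hroot e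
    rwa [hdeg, hF, ← Matrix.orderOf_eq_orderOf_root hirr, ← hm] at this
  have hmd : m ∣ (p ^ n) ^ d - 1 := (hdvd d).2 dvd_rfl
  refine ⟨fun hpm => hp.one_lt.ne' ?_,
    ⟨⟨hd, hmd⟩, fun e ⟨he, hme⟩ => Nat.le_of_dvd he ((hdvd e).1 hme)⟩, fun l hl hlm _ => ?_⟩
  · have hcop : ((p ^ n) ^ d).Coprime ((p ^ n) ^ d - 1) :=
      (Nat.coprime_self_sub_right (Nat.one_le_pow _ _ (pow_pos hp.pos n))).mpr
        (Nat.coprime_one_right _)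
    exact Nat.eq_one_of_dvd_coprimes hcop (dvd_pow (dvd_pow_self p hn.ne') hd.ne') (hpm.trans hmd)
  · have hAl : A ^ l ≠ 1 := pow_ne_one_of_lt_orderOf hl.ne' (hm ▸ hlm)
    have heval : aeval A (X ^ l - 1 : F[X]) = A ^ l - 1 := by simp
    have hu : IsUnit (A ^ l - 1) := heval ▸
      Matrix.isUnit_aeval_of_irreducible_charpoly hirr (heval ▸ sub_ne_zero.mpr hAl)
    rw [Matrix.rank_of_isUnit _ hu, Fintype.card_fin]
end

section
/- Let A be an invertible d×d matrix over the finite field F_q (q = p^n, p prime) with characteristic polynomial f(t), and let m be the multiplicative order of A. If (a) p does not divide m, (b) d equals the multiplicative order of q modulo m, and (c) rank(A^l - E) = d for every positive integer l < m dividing m, then f(t) is irreducible over F_q. -/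
/-!
Let `g` be a monic irreducible factor of `f` and `α` the root of `g` in `K = F_q[t]/(g)`.
Applying powers of `A` to an eigenvector for `α` shows that `α ^ m = 1`, and that `α ^ l = 1`
forces `det (A ^ l - E) = 0`; by (c) the order of `α` is therefore exactly `m`. Since `K` has
`q ^ deg g` elements, `m ∣ q ^ deg g - 1`, so `deg g ≥ d` by (b), and `g = f`.
-/

open Polynomial

namespace Matrix

variable {n : Type*} [Fintype n] [DecidableEq n]

theorem det_ne_zero_of_rank_eq_card {K : Type*} [Field K] {A : Matrix n n K}
    (h : A.rank = Fintype.card n) : A.det ≠ 0 := by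
  intro hdet
  obtain ⟨v, hv0, hv⟩ := exists_mulVec_eq_zero_iff.mpr hdet
  have hker : LinearMap.ker A.mulVecLin = ⊥ := by
    rw [← Submodule.finrank_eq_zero]
    have := LinearMap.finrank_range_add_finrank_ker A.mulVecLin
    rw [Module.finrank_fintype_fun_eq_card, ← rank, h] at this
    omega
  exact hv0 <| (Submodule.mem_bot K).mp (hker ▸ LinearMap.mem_ker.mpr hv)

theorem pow_mulVec_eq_pow_smul {R : Type*} [CommSemiring R] {M : Matrix n n R} {v : n → R}
    {a : R} (h : M *ᵥ v = a • v) (l : ℕ) : (M ^ l) *ᵥ v = a ^ l • v := by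
  induction l with
  | zero => simp
  | succ l ih => rw [pow_succ', ← mulVec_mulVec, ih, mulVec_smul, h, smul_smul, ← pow_succ]

variable {F K : Type*} [Field F] [Field K] [Algebra F K] {A : Matrix n n F} {α : K}

theorem exists_mulVec_map_eq_smul_of_aeval_charpoly_eq_zero (hα : aeval α A.charpoly = 0) :
    ∃ v ≠ 0, (algebraMap F K).mapMatrix A *ᵥ v = α • v := by
  have hdet : (scalar n α - (algebraMap F K).mapMatrix A).det = 0 := by
    rw [← eval_charpoly, RingHom.mapMatrix_apply, charpoly_map, eval_map_algebraMap, hα]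
  obtain ⟨v, hv0, hv⟩ := exists_mulVec_eq_zero_iff.mpr hdet
  refine ⟨v, hv0, ?_⟩
  rw [sub_mulVec, sub_eq_zero, scalar_apply, ← smul_one_eq_diagonal, smul_mulVec,
    one_mulVec] at hv
  exact hv.symm

theorem pow_eq_one_of_aeval_charpoly_eq_zero (hα : aeval α A.charpoly = 0) {l : ℕ}
    (hl : A ^ l = 1) : α ^ l = 1 := by
  obtain ⟨v, hv0, hv⟩ := exists_mulVec_map_eq_smul_of_aeval_charpoly_eq_zero hα
  have hvl := pow_mulVec_eq_pow_smul hv l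
  rw [← map_pow, hl, map_one, one_mulVec] at hvl
  obtain ⟨i, hi⟩ := Function.ne_iff.mp hv0
  exact (mul_left_eq_self₀.mp (congrFun hvl i).symm).resolve_right hi

theorem orderOf_dvd_orderOf_of_aeval_charpoly_eq_zero (hα : aeval α A.charpoly = 0) :
    orderOf α ∣ orderOf A :=
  orderOf_dvd_of_pow_eq_one (pow_eq_one_of_aeval_charpoly_eq_zero hα (pow_orderOf_eq_one A))

theorem det_pow_sub_one_eq_zero_of_aeval_charpoly_eq_zero (hα : aeval α A.charpoly = 0) {l : ℕ}
    (hl : α ^ l = 1) : (A ^ l - 1).det = 0 := by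
  obtain ⟨v, hv0, hv⟩ := exists_mulVec_map_eq_smul_of_aeval_charpoly_eq_zero hα
  have hker : (algebraMap F K).mapMatrix (A ^ l - 1) *ᵥ v = 0 := by
    rw [map_sub, map_pow, map_one, sub_mulVec, pow_mulVec_eq_pow_smul hv, hl, one_smul,
      one_mulVec, sub_self]
  have hdet := exists_mulVec_eq_zero_iff.mp ⟨v, hv0, hker⟩
  rwa [← RingHom.map_det, map_eq_zero_iff _ (algebraMap F K).injective] at hdet

theorem orderOf_eq_orderOf_of_aeval_charpoly_eq_zero (hα : aeval α A.charpoly = 0)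
    (hA : 0 < orderOf A)
    (hdet : ∀ l, 0 < l → l < orderOf A → l ∣ orderOf A → (A ^ l - 1).det ≠ 0) :
    orderOf α = orderOf A := by
  have hdvd := orderOf_dvd_orderOf_of_aeval_charpoly_eq_zero hα
  by_contra hne
  exact hdet _ (Nat.pos_of_dvd_of_pos hdvd hA) (lt_of_le_of_ne (Nat.le_of_dvd hA hdvd) hne) hdvd
    (det_pow_sub_one_eq_zero_of_aeval_charpoly_eq_zero hα (pow_orderOf_eq_one α))

end Matrix

theorem AdjoinRoot.orderOf_dvd_card_pow_natDegree_sub_one {F : Type*} [Field F] [Fintype F]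
    {g : F[X]} [Fact (Irreducible g)] {x : AdjoinRoot g} (hx : x ≠ 0) :
    orderOf x ∣ Fintype.card F ^ g.natDegree - 1 := by
  have hg : g ≠ 0 := (Fact.out : Irreducible g).ne_zero
  have : Module.Finite F (AdjoinRoot g) := (powerBasis hg).finite
  have : Finite (AdjoinRoot g) := Module.finite_of_finite F
  have : Fintype (AdjoinRoot g) := Fintype.ofFinite _
  rw [← powerBasis_dim hg, ← (powerBasis hg).finrank, ← Module.card_eq_pow_finrank]
  exact orderOf_dvd_of_pow_eq_one (FiniteField.pow_card_sub_one_eq_one x hx)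

theorem charpoly_irreducible_sufficient_conditions_general
    (p n d : ℕ)
    (F : Type) [Field F] [Fintype F] (hF : Fintype.card F = p ^ n)
    (A : Matrix (Fin d) (Fin d) F)
    (m : ℕ) (hm : m = orderOf A)
    (hb : IsLeast {e : ℕ | 0 < e ∧ m ∣ (p ^ n) ^ e - 1} d)
    (hc : ∀ l : ℕ, 0 < l → l < m → l ∣ m → (A ^ l - 1).rank = d) :
    Irreducible (Matrix.charpoly A) := by
  subst hm
  obtain ⟨⟨hd, hm_dvd⟩, hd_least⟩ := hb
  have hm0 : 0 < orderOf A := Nat.pos_of_dvd_of_pos hm_dvd <|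
    Nat.sub_pos_of_lt <| Nat.one_lt_pow hd.ne' (hF ▸ Fintype.one_lt_card)
  have hdeg : A.charpoly.natDegree = d := by simp [Matrix.charpoly_natDegree_eq_dim]
  obtain ⟨g, hg_monic, hg_irr, hg_dvd⟩ :=
    A.charpoly.exists_monic_irreducible_factor (not_isUnit_of_natDegree_pos _ (hdeg.symm ▸ hd))
  have := Fact.mk hg_irr
  have hα : aeval (AdjoinRoot.root g) A.charpoly = 0 := by
    obtain ⟨c, hfac⟩ := hg_dvd
    rw [hfac, map_mul, AdjoinRoot.aeval_eq, AdjoinRoot.mk_self, zero_mul]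
  have hord := Matrix.orderOf_eq_orderOf_of_aeval_charpoly_eq_zero hα hm0 fun l hl hlt hdvd ↦
    Matrix.det_ne_zero_of_rank_eq_card ((hc l hl hlt hdvd).trans (Fintype.card_fin d).symm)
  have hroot_ne : AdjoinRoot.root g ≠ 0 := by
    rintro h
    rw [h, orderOf_zero] at hord
    omega
  have hd_le : d ≤ g.natDegree := hd_least ⟨hg_irr.natDegree_pos,
    hF ▸ hord ▸ AdjoinRoot.orderOf_dvd_card_pow_natDegree_sub_one hroot_ne⟩
  rwa [eq_of_monic_of_dvd_of_natDegree_le hg_monic (Matrix.charpoly_monic A) hg_dvd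
    (hdeg.trans_le hd_le)]

/-- Let A be an invertible d×d matrix over F_q (q = p^n, p prime) with
characteristic polynomial f and multiplicative order m. If (a) p ∤ m,
(b) d is the multiplicative order of q modulo m, and
(c) rank(A^l - E) = d for every positive l < m dividing m,
then f is irreducible over F_q. -/
theorem charpoly_irreducible_sufficient_conditions
    (p n d : ℕ) (hp : p.Prime) (hn : 0 < n)
    (F : Type) [Field F] [Fintype F] (hF : Fintype.card F = p ^ n)
    (A : Matrix (Fin d) (Fin d) F) (hA : IsUnit A)
    (m : ℕ) (hm : m = orderOf A)
    (ha : ¬ p ∣ m)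
    (hb : IsLeast {e : ℕ | 0 < e ∧ m ∣ (p ^ n) ^ e - 1} d)
    (hc : ∀ l : ℕ, 0 < l → l < m → l ∣ m → (A ^ l - 1).rank = d) :
    Irreducible (Matrix.charpoly A) :=
  charpoly_irreducible_sufficient_conditions_general p n d F hF A m hm hb hc
end

section
/- Let f(t) be a monic polynomial of degree d over the finite field F_q (q = p^n, p prime) with nonzero constant term, let [f] be its companion matrix, and let m = ord f(t) be the multiplicative order of [f]. Then f(t) is irreducible over F_q if and only if: (a) p does not divide m, (b) d equals the multiplicative order of q modulo m, and (c) rank([f]^l - E) = d for every positive integer l < m dividing m. -/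
/-- The companion matrix of a monic polynomial
`f = a_0 + a_1 t + ... + a_{d-1} t^{d-1} + t^d`: the d×d matrix with 1's on the
superdiagonal, last row `(-a_0, ..., -a_{d-1})`, and 0's elsewhere. -/
def companionMatrix {F : Type} [Field F] (d : ℕ) (f : Polynomial F) :
    Matrix (Fin d) (Fin d) F :=
  Matrix.of fun i j =>
    if (i : ℕ) = d - 1 then -f.coeff (j : ℕ)
    else if (j : ℕ) = (i : ℕ) + 1 then 1 else 0

/-!
The companion matrix `[f]` is the transpose of the matrix of multiplication by the root `α`
of `f` in the basis `1, α, …, α^(d-1)` of `F[t]/(f)`. Hence `ord f = ord α`, and `[f]^l - E`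
has full rank iff `α^l - 1` is a unit of `F[t]/(f)`.

If `f` is irreducible, `F[t]/(f)` is the field with `q^d` elements, so `m ∣ q^d - 1`; and
`m ∣ q^e - 1` means `α^(q^e) = α`, i.e. `f ∣ t^(q^e) - t`, which forces `d ∣ e`. Conversely,
let `g` be a monic irreducible factor of `f` and `β` the image of `α` in `F[t]/(g)`. The order
of `β` divides `m`, and cannot be a proper divisor `l`, since the unit `α^l - 1` cannot map to
`β^l - 1 = 0`. So `β` has order `m`, whence `m ∣ q^(deg g) - 1`, `d ≤ deg g`, and `g = f`.
-/

open Polynomial Matrix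

theorem Nat.Prime.not_dvd_pow_sub_one {p k : ℕ} (hp : p.Prime) (hk : k ≠ 0) :
    ¬ p ∣ p ^ k - 1 := by
  intro h
  have h1 := Nat.dvd_sub (dvd_pow_self p hk) h
  rw [Nat.sub_sub_self (Nat.one_le_pow _ _ hp.pos)] at h1
  exact hp.not_dvd_one h1

theorem orderOf_map_eq_of_forall_isUnit_pow_sub_one {A B : Type*} [Ring A] [Ring B]
    [Nontrivial B] (φ : A →+* B) {x : A} (hx : 0 < orderOf x)
    (h : ∀ l, 0 < l → l < orderOf x → l ∣ orderOf x → IsUnit (x ^ l - 1)) :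
    orderOf (φ x) = orderOf x := by
  have hdvd : orderOf (φ x) ∣ orderOf x := orderOf_map_dvd (φ : A →* B) x
  by_contra hne
  have hunit := (h _ (Nat.pos_of_dvd_of_pos hdvd hx)
    ((Nat.le_of_dvd hx hdvd).lt_of_ne hne) hdvd).map φ
  rw [map_sub, map_pow, map_one, pow_orderOf_eq_one, sub_self] at hunit
  exact not_isUnit_zero hunit

theorem Matrix.rank_eq_card_iff_isUnit {n K : Type*} [Fintype n] [DecidableEq n] [Field K]
    {A : Matrix n n K} : A.rank = Fintype.card n ↔ IsUnit A := by
  refine ⟨fun h => ?_, rank_of_isUnit A⟩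
  rw [← mulVec_surjective_iff_isUnit, ← Matrix.coe_mulVecLin, ← LinearMap.range_eq_top]
  exact Submodule.eq_top_of_finrank_eq <| by
    rw [← Matrix.rank, h, Module.finrank_fintype_fun_eq_card]

theorem Algebra.rank_leftMulMatrix_eq_card_iff_isUnit {ι K S : Type*} [Fintype ι]
    [DecidableEq ι] [Field K] [CommRing S] [Algebra K S] (b : Module.Basis ι K S) {x : S} :
    (leftMulMatrix b x).rank = Fintype.card ι ↔ IsUnit x := by
  rw [Matrix.rank_eq_card_iff_isUnit, leftMulMatrix_apply, LinearMap.isUnit_toMatrix_iff,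
    Algebra.lmul_isUnit_iff]

theorem AdjoinRoot.isUnit_root_of_isUnit_coeff_zero {R : Type*} [CommRing R] {f : R[X]}
    (h : IsUnit (f.coeff 0)) : IsUnit (root f) := by
  have hf := congrArg (mk f) f.divX_mul_X_add
  rw [map_add, map_mul, mk_X, mk_C, mk_self] at hf
  have hu := (h.map (of f)).neg
  rw [neg_eq_of_add_eq_zero_left hf] at hu
  exact isUnit_of_mul_isUnit_right hu

section PowerBasis

variable {F : Type} [Field F] {S : Type*} [CommRing S] [Algebra F S] (pb : PowerBasis F S)

theorem PowerBasis.leftMulMatrix_gen_eq_companionMatrix_transpose :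
    Algebra.leftMulMatrix pb.basis pb.gen = (companionMatrix pb.dim (minpoly F pb.gen))ᵀ := by
  rw [pb.leftMulMatrix, pb.minpolyGen_eq]
  ext i j
  have hj : (j : ℕ) < pb.dim := j.isLt
  simp only [of_apply, transpose_apply, companionMatrix]
  congr 1
  exact propext (by omega)

theorem companionMatrix_minpoly_pow_sub_one (l : ℕ) :
    companionMatrix pb.dim (minpoly F pb.gen) ^ l - 1 =
      (Algebra.leftMulMatrix pb.basis (pb.gen ^ l - 1))ᵀ := by
  rw [map_sub, map_pow, map_one, pb.leftMulMatrix_gen_eq_companionMatrix_transpose,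
    transpose_sub, transpose_pow, transpose_transpose, transpose_one]

theorem orderOf_companionMatrix_minpoly :
    orderOf (companionMatrix pb.dim (minpoly F pb.gen)) = orderOf pb.gen :=
  orderOf_eq_orderOf_iff.mpr fun l => by
    rw [← sub_eq_zero, companionMatrix_minpoly_pow_sub_one, transpose_eq_zero,
      (Algebra.leftMulMatrix_injective _).eq_iff' (map_zero _), sub_eq_zero]

theorem rank_companionMatrix_minpoly_pow_sub_one_eq_dim_iff (l : ℕ) :
    (companionMatrix pb.dim (minpoly F pb.gen) ^ l - 1).rank = pb.dim ↔
      IsUnit (pb.gen ^ l - 1) := by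
  rw [companionMatrix_minpoly_pow_sub_one, rank_transpose,
    ← Algebra.rank_leftMulMatrix_eq_card_iff_isUnit pb.basis, Fintype.card_fin]

end PowerBasis

namespace AdjoinRoot

variable {F : Type} [Field F] {f : F[X]}

theorem orderOf_companionMatrix (hf : f.Monic) :
    orderOf (companionMatrix f.natDegree f) = orderOf (root f) := by
  have := orderOf_companionMatrix_minpoly (powerBasis hf.ne_zero)
  rwa [minpoly_powerBasis_gen_of_monic hf, powerBasis_gen, powerBasis_dim] at this

theorem rank_companionMatrix_pow_sub_one_eq_natDegree_iff (hf : f.Monic) (l : ℕ) :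
    (companionMatrix f.natDegree f ^ l - 1).rank = f.natDegree ↔ IsUnit (root f ^ l - 1) := by
  have := rank_companionMatrix_minpoly_pow_sub_one_eq_dim_iff (powerBasis hf.ne_zero) l
  rwa [minpoly_powerBasis_gen_of_monic hf, powerBasis_gen, powerBasis_dim] at this

theorem natDegree_dvd_of_root_pow_card_pow_eq_root (hi : Irreducible f) {e : ℕ}
    (h : root f ^ Nat.card F ^ e = root f) : f.natDegree ∣ e := by
  refine hi.natDegree_dvd_of_dvd_X_pow_card_pow_sub_X ?_
  rw [← mk_eq_zero, ← aeval_eq]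
  simp [h]

variable [Finite F]

theorem orderOf_root_pos (hf : f.Monic) (hc0 : f.coeff 0 ≠ 0) : 0 < orderOf (root f) := by
  have := (powerBasis hf.ne_zero).finite
  have := Module.finite_of_finite F (M := AdjoinRoot f)
  obtain ⟨u, hu⟩ := isUnit_root_of_isUnit_coeff_zero hc0.isUnit
  rw [← hu, orderOf_units]
  exact orderOf_pos u

theorem orderOf_root_dvd_card_pow_natDegree_sub_one (hi : Irreducible f) (h0 : root f ≠ 0) :
    orderOf (root f) ∣ Nat.card F ^ f.natDegree - 1 := by
  have := Fact.mk hi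
  have := (powerBasis hi.ne_zero).finite
  have := Module.finite_of_finite F (M := AdjoinRoot f)
  have := Fintype.ofFinite (AdjoinRoot f)
  have hcard : Fintype.card (AdjoinRoot f) = Nat.card F ^ f.natDegree := by
    rw [Fintype.card_eq_nat_card, Module.natCard_eq_pow_finrank (K := F),
      (powerBasis hi.ne_zero).finrank, powerBasis_dim]
  exact hcard ▸ orderOf_dvd_of_pow_eq_one (FiniteField.pow_card_sub_one_eq_one _ h0)

theorem isLeast_orderOf_root_dvd_card_pow_sub_one (hi : Irreducible f) (h0 : root f ≠ 0) :
    IsLeast {e : ℕ | 0 < e ∧ orderOf (root f) ∣ Nat.card F ^ e - 1} f.natDegree := by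
  refine ⟨⟨hi.natDegree_pos, orderOf_root_dvd_card_pow_natDegree_sub_one hi h0⟩, ?_⟩
  rintro e ⟨he, hdvd⟩
  refine Nat.le_of_dvd he (natDegree_dvd_of_root_pow_card_pow_eq_root hi ?_)
  have hq : 0 < Nat.card F ^ e := pow_pos Nat.card_pos e
  rw [← Nat.sub_add_cancel hq, pow_succ, orderOf_dvd_iff_pow_eq_one.mp hdvd, one_mul]

end AdjoinRoot

open AdjoinRoot

/-- Let f be a monic polynomial of degree d over F_q (q = p^n) with
nonzero constant term, [f] its companion matrix, m = ord f = m.o.[f]. Then f is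
irreducible over F_q iff (a) p ∤ m, (b) d is the multiplicative order of q modulo m,
and (c) rank([f]^l - E) = d for every positive l < m dividing m. -/
theorem irreducible_iff_order_conditions
    (p n d : ℕ) (hp : p.Prime) (hn : 0 < n)
    (F : Type) [Field F] [Fintype F] (hF : Fintype.card F = p ^ n)
    (f : Polynomial F) (hmonic : f.Monic) (hdeg : f.natDegree = d)
    (hc0 : f.coeff 0 ≠ 0)
    (m : ℕ) (hm : m = orderOf (companionMatrix d f)) :
    Irreducible f ↔
      (¬ p ∣ m ∧
       IsLeast {e : ℕ | 0 < e ∧ m ∣ (p ^ n) ^ e - 1} d ∧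
       ∀ l : ℕ, 0 < l → l < m → l ∣ m → (companionMatrix d f ^ l - 1).rank = d) := by
  subst hdeg hm
  have hq : Nat.card F = p ^ n := by rw [Nat.card_eq_fintype_card, hF]
  have hroot : IsUnit (root f) := isUnit_root_of_isUnit_coeff_zero hc0.isUnit
  simp only [orderOf_companionMatrix hmonic,
    rank_companionMatrix_pow_sub_one_eq_natDegree_iff hmonic, ← hq]
  constructor
  · intro hi
    have := Fact.mk hi
    have hleast := isLeast_orderOf_root_dvd_card_pow_sub_one hi hroot.ne_zero
    refine ⟨fun hpm => ?_, hleast, fun l hl hlm _ =>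
      (sub_ne_zero.mpr (pow_ne_one_of_lt_orderOf hl.ne' hlm)).isUnit⟩
    refine hp.not_dvd_pow_sub_one (mul_ne_zero hn.ne' hi.natDegree_pos.ne') ?_
    rw [pow_mul, ← hq]
    exact hpm.trans hleast.1.2
  · rintro ⟨-, hleast, hunit⟩
    obtain ⟨g, hg, hgi, hgf⟩ :=
      exists_monic_irreducible_factor f (not_isUnit_of_natDegree_pos f hleast.1.1)
    have := Fact.mk hgi
    let π : AdjoinRoot f →ₐ[F] AdjoinRoot g := algHomOfDvd F f g hgf
    have hord : orderOf (root g) = orderOf (root f) := by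
      simpa [π] using orderOf_map_eq_of_forall_isUnit_pow_sub_one π.toRingHom
        (orderOf_root_pos hmonic hc0) hunit
    have hg0 : root g ≠ 0 := by simpa [π] using (hroot.map π).ne_zero
    have hle : f.natDegree ≤ g.natDegree :=
      hleast.2 (hord ▸ (isLeast_orderOf_root_dvd_card_pow_sub_one hgi hg0).1)
    rwa [eq_of_monic_of_dvd_of_natDegree_le hg hmonic hgf hle]
end

section
/- Let A be a d×d matrix over the finite field F_q whose characteristic polynomial is irreducible over F_q, and let l be a positive integer. Then there exists a monic irreducible polynomial g(t) over F_q and a positive integer s with s·deg(g) = d such that the characteristic polynomial of A^l equals g(t)^s. -/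
/-!
Since `χ_A(A) = 0`, evaluation at `A` factors through the field `F[t]/(χ_A)`, so `A^l` is
annihilated by the minimal polynomial `g` of the class of `t^l` there, which is irreducible.
Every irreducible factor of `χ_{A^l}` has a root that is an eigenvalue of `A^l` over a suitable
extension, hence divides the minimal polynomial of `A^l`, hence divides `g`. So `χ_{A^l}` is a
power of `g`, and comparing degrees gives `s · deg g = d`.
-/

open Polynomial

theorem exists_monic_irreducible_aeval_aeval_eq_zero {K B : Type*} [Field K] [Ring B]
    [Algebra K B] {p : K[X]} (hp : Irreducible p) {x : B} (hx : aeval x p = 0) (q : K[X]) :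
    ∃ g : K[X], g.Monic ∧ Irreducible g ∧ aeval (aeval x q) g = 0 := by
  have := Fact.mk hp
  have := (AdjoinRoot.powerBasis hp.ne_zero).finite
  have hint : IsIntegral K (aeval (AdjoinRoot.root p) q) := Algebra.IsIntegral.isIntegral _
  refine ⟨minpoly K _, minpoly.monic hint, minpoly.irreducible hint, ?_⟩
  obtain ⟨r, hr⟩ : p ∣ (minpoly K (aeval (AdjoinRoot.root p) q)).comp q := by
    rw [← AdjoinRoot.mk_eq_zero, ← AdjoinRoot.aeval_eq, aeval_comp, minpoly.aeval]
  rw [← aeval_comp, hr, map_mul, hx, zero_mul]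

namespace Matrix

variable {n K : Type*} [Fintype n] [DecidableEq n] [Field K]

theorem isRoot_minpoly_iff_isRoot_charpoly (M : Matrix n n K) (μ : K) :
    (minpoly K M).IsRoot μ ↔ M.charpoly.IsRoot μ := by
  rw [← minpoly_toLin', ← charpoly_toLin', ← Module.End.hasEigenvalue_iff_isRoot,
    Module.End.hasEigenvalue_iff_isRoot_charpoly]

theorem dvd_minpoly_of_irreducible_of_dvd_charpoly (M : Matrix n n K) {p : K[X]}
    (hp : Irreducible p) (hpM : p ∣ M.charpoly) : p ∣ minpoly K M := by
  have := Fact.mk hp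
  set L := AdjoinRoot p
  set N := M.map (algebraMap K L)
  have hroot : (minpoly L N).IsRoot (AdjoinRoot.root p) := by
    rw [isRoot_minpoly_iff_isRoot_charpoly, charpoly_map, IsRoot, eval_map_algebraMap,
      AdjoinRoot.aeval_eq, AdjoinRoot.mk_eq_zero]
    exact hpM
  have hdvd : minpoly L N ∣ (minpoly K M).map (algebraMap K L) := by
    refine minpoly.dvd _ _ ?_
    rw [aeval_map_algebraMap, show N = (Algebra.ofId K L).mapMatrix M from rfl,
      aeval_algHom_apply, minpoly.aeval, map_zero]
  rw [← AdjoinRoot.mk_eq_zero, ← AdjoinRoot.aeval_eq, ← eval_map_algebraMap]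
  exact hroot.dvd hdvd

open UniqueFactorizationMonoid in
theorem charpoly_eq_pow_of_aeval_eq_zero (M : Matrix n n K) {g : K[X]} (hg : g.Monic)
    (hirr : Irreducible g) (hMg : aeval M g = 0) : ∃ s : ℕ, M.charpoly = g ^ s := by
  classical
  have hfactor : ∀ {m}, m ∈ normalizedFactors M.charpoly → m = g := by
    intro m hm
    have hmirr := irreducible_of_normalized_factor m hm
    have hmg : m ∣ g := (M.dvd_minpoly_of_irreducible_of_dvd_charpoly hmirr
      (dvd_of_mem_normalizedFactors hm)).trans (minpoly.dvd K M hMg)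
    rw [← normalize_normalized_factor m hm, ← hg.normalize_eq_self]
    exact normalize_eq_normalize_iff_associated.mpr (hmirr.associated_of_dvd hirr hmg)
  obtain ⟨s, hs⟩ := exists_associated_prime_pow_of_unique_normalized_factor hfactor
    (charpoly_monic M).ne_zero
  exact ⟨s, eq_of_monic_of_associated (charpoly_monic M) (hg.pow s) hs.symm⟩

end Matrix

theorem charpoly_pow_eq_irreducible_pow_general
    (F : Type) [Field F] (d : ℕ)
    (A : Matrix (Fin d) (Fin d) F)
    (hirr : Irreducible (Matrix.charpoly A))
    (l : ℕ) :
    ∃ (g : Polynomial F) (s : ℕ), g.Monic ∧ Irreducible g ∧ 0 < s ∧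
      s * g.natDegree = d ∧ Matrix.charpoly (A ^ l) = g ^ s := by
  obtain ⟨g, hg, hgirr, hAg⟩ :=
    exists_monic_irreducible_aeval_aeval_eq_zero hirr (Matrix.aeval_self_charpoly A) (X ^ l)
  rw [map_pow, aeval_X] at hAg
  obtain ⟨s, hs⟩ := (A ^ l).charpoly_eq_pow_of_aeval_eq_zero hg hgirr hAg
  have hsd : s * g.natDegree = d := by
    rw [← natDegree_pow, ← hs, Matrix.charpoly_natDegree_eq_dim, Fintype.card_fin]
  refine ⟨g, s, hg, hgirr, Nat.pos_of_ne_zero ?_, hsd, hs⟩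
  rintro rfl
  obtain rfl : d = 0 := by simpa using hsd.symm
  rw [Matrix.charpoly_isEmpty] at hirr
  exact not_irreducible_one hirr

/-- Let A be a d×d matrix over F_q whose characteristic polynomial is
irreducible over F_q, and let l be a positive integer.  Then there is a monic
irreducible polynomial g over F_q and a positive integer s with s·deg(g) = d such
that the characteristic polynomial of A^l equals g^s. -/
theorem charpoly_pow_eq_irreducible_pow
    (F : Type) [Field F] [Fintype F] (d : ℕ)
    (A : Matrix (Fin d) (Fin d) F)
    (hirr : Irreducible (Matrix.charpoly A))
    (l : ℕ) (hl : 0 < l) :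
    ∃ (g : Polynomial F) (s : ℕ), g.Monic ∧ Irreducible g ∧ 0 < s ∧
      s * g.natDegree = d ∧ Matrix.charpoly (A ^ l) = g ^ s :=
  charpoly_pow_eq_irreducible_pow_general F d A hirr l
end
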